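/- The map ρ ↦ π_ρ, where π_ρ(a|s) = ρ(s,a)/Σ_{a'} ρ(s,a'), is a bijection between the set of strictly positive valid occupancy measures D and the set of policies Π with everywhere-positive occupancy measures, with inverse π ↦ ρ_π. -/
import Mathlib


open scoped BigOperators

variable {S A : Type*} [Fintype S] [Fintype A]

/-- State distribution at time `t` of the Markov chain induced by policy `π`. -/
noncomputable def stateDist (π : S → A → ℝ) (ρ0 : S → ℝ) (P : S → A → S → ℝ) :
    ℕ → S → ℝ
  | 0, s => ρ0 s
  | t + 1, s' => ∑ s : S, ∑ a : A, stateDist π ρ0 P t s * π s a * P s a s'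

/-- The occupancy measure map `π ↦ ρ_π`. -/
noncomputable def occF (γ : ℝ) (ρ0 : S → ℝ) (P : S → A → S → ℝ)
    (π : S → A → ℝ) : S → A → ℝ :=
  fun s a => ∑' t : ℕ, γ ^ t * (stateDist π ρ0 P t s * π s a)

/-- A Markov policy: nonnegative and normalized over actions at each state. -/
def IsPolicy (π : S → A → ℝ) : Prop :=
  (∀ s a, 0 ≤ π s a) ∧ ∀ s, ∑ a, π s a = 1

/-- The policy induced by an occupancy measure: π_ρ(a|s) = ρ(s,a) / Σ_{a'} ρ(s,a'). -/
noncomputable def polOf (ρ : S → A → ℝ) : S → A → ℝ :=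
  fun s a => ρ s a / ∑ a', ρ s a'

/-- `ρ ↦ π_ρ` is a bijection between the set `D` of strictly positive valid
occupancy measures and the set of policies with everywhere-positive occupancy
measure, with inverse `π ↦ ρ_π`. -/
theorem occupancy_policy_bijection
    (γ : ℝ) (hγ0 : 0 ≤ γ) (hγ1 : γ < 1)
    (ρ0 : S → ℝ) (hρ00 : ∀ s, 0 ≤ ρ0 s) (hρ01 : ∑ s, ρ0 s = 1)
    (P : S → A → S → ℝ) (hP0 : ∀ s a s', 0 ≤ P s a s')
    (hP1 : ∀ s a, ∑ s', P s a s' = 1) :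
    Set.BijOn polOf
        {ρ : S → A → ℝ | ∃ π, IsPolicy π ∧ (∀ s a, 0 < occF γ ρ0 P π s a) ∧
          occF γ ρ0 P π = ρ}
        {π : S → A → ℝ | IsPolicy π ∧ ∀ s a, 0 < occF γ ρ0 P π s a} ∧
      Set.InvOn (occF γ ρ0 P) polOf
        {ρ : S → A → ℝ | ∃ π, IsPolicy π ∧ (∀ s a, 0 < occF γ ρ0 P π s a) ∧
          occF γ ρ0 P π = ρ}
        {π : S → A → ℝ | IsPolicy π ∧ ∀ s a, 0 < occF γ ρ0 P π s a} := by
  -- Key lemma: polOf (occF π) = π for any policy with positive occupancy.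
  have key : ∀ π : S → A → ℝ, IsPolicy π → (∀ s a, 0 < occF γ ρ0 P π s a) →
      polOf (occF γ ρ0 P π) = π := by
    intro π hπ hpos
    funext s a
    set T : ℝ := ∑' t : ℕ, γ ^ t * stateDist π ρ0 P t s with hT
    have hocc : ∀ a', occF γ ρ0 P π s a' = T * π s a' := by
      intro a'
      rw [hT, ← tsum_mul_right]
      simp only [occF, mul_assoc]
    have hTne : T ≠ 0 := by
      intro h0
      have := hpos s a
      rw [hocc a, h0, zero_mul] at this
      exact lt_irrefl _ this
    have hsum : ∑ a', occF γ ρ0 P π s a' = T := by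
      simp only [hocc, ← Finset.mul_sum, hπ.2 s, mul_one]
    simp only [polOf, hsum, hocc a]
    exact mul_div_cancel_left₀ _ hTne
  constructor
  · refine ⟨?_, ?_, ?_⟩
    · rintro ρ ⟨π, hπ, hpos, hρ⟩
      have : polOf ρ = π := by rw [← hρ]; exact key π hπ hpos
      exact this ▸ ⟨hπ, hpos⟩
    · rintro ρ1 ⟨π1, hπ1, hpos1, hρ1⟩ ρ2 ⟨π2, hπ2, hpos2, hρ2⟩ heq
      have h1 : polOf ρ1 = π1 := by rw [← hρ1]; exact key π1 hπ1 hpos1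
      have h2 : polOf ρ2 = π2 := by rw [← hρ2]; exact key π2 hπ2 hpos2
      rw [← hρ1, ← hρ2, ← h1, ← h2, heq]
    · rintro π ⟨hπ, hpos⟩
      exact ⟨occF γ ρ0 P π, ⟨π, hπ, hpos, rfl⟩, key π hπ hpos⟩
  · constructor
    · rintro ρ ⟨π, hπ, hpos, hρ⟩
      have : polOf ρ = π := by rw [← hρ]; exact key π hπ hpos
      rw [this, hρ]
    · rintro π ⟨hπ, hpos⟩
      exact key π hπ hpos
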